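/- Finiteness of the stretched-exponential moment series: let γ ∈ (−2,0), 0 < s < γ+2, κ > 0, and define for l > 4 α(l) = l^{2−4/(γ+2)}/(l−4) · ((l−4)/(l+γ−2))^{(l−4)/(γ+2)} · l^{l/(γ+2)}. Then the series Σ_{j≥j₀} (κ^j / j!) α(sj) converges, where j₀ is the smallest integer with s(j₀+1) > 4. -/

import Mathlib

/-!
Bounding the middle factor of `α(l)` by `1`, the first by `l²`, and using `j! ≥ (j/e)^j`, the
`j`-th term is at most `(s j)² r_j^j` with `r_j = κ e s (s j)^(θ - 1)`, `θ = s/(γ+2)`. Since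
`θ < 1`, `r_j → 0`, so the series is eventually dominated by `s² Σ j² 2^(-j)`.
-/

/-- The moment-growth constant `α(l)` (for `l > 4`) from the linear-in-time propagation of
`L¹` moments for the Landau equation with soft potentials. -/
noncomputable def momentConst (γ l : ℝ) : ℝ :=
  l ^ (2 - 4 / (γ + 2)) / (l - 4) * ((l - 4) / (l + γ - 2)) ^ ((l - 4) / (γ + 2))
    * l ^ (l / (γ + 2))

open Real Filter Topology
open scoped Nat

lemma momentConst_nonneg {γ l : ℝ} (hγ : -2 < γ) (hl : 4 < l) : 0 ≤ momentConst γ l := by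
  unfold momentConst
  have hden : 0 < l + γ - 2 := by linarith
  have hγ2 : 0 < γ + 2 := by linarith
  refine mul_nonneg (mul_nonneg ?_ ?_) (rpow_nonneg (by linarith) _)
  · exact div_nonneg (rpow_nonneg (by linarith) _) (by linarith)
  · exact rpow_nonneg (div_nonneg (by linarith) hden.le) _

lemma momentConst_le {γ l : ℝ} (hγ : -2 < γ) (hl : 5 ≤ l) :
    momentConst γ l ≤ l ^ 2 * l ^ (l / (γ + 2)) := by
  have hγ2 : 0 < γ + 2 := by linarith
  have hden : 0 < l + γ - 2 := by linarith
  have hmiddle : ((l - 4) / (l + γ - 2)) ^ ((l - 4) / (γ + 2)) ≤ 1 :=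
    rpow_le_one (div_nonneg (by linarith) hden.le) ((div_le_one hden).mpr (by linarith))
      (div_nonneg (by linarith) hγ2.le)
  have hfirst : l ^ (2 - 4 / (γ + 2)) / (l - 4) ≤ l ^ 2 := by
    calc l ^ (2 - 4 / (γ + 2)) / (l - 4) ≤ l ^ (2 - 4 / (γ + 2)) :=
          div_le_self (rpow_nonneg (by linarith) _) (by linarith)
      _ ≤ l ^ (2 : ℝ) := rpow_le_rpow_of_exponent_le (by linarith)
          (sub_le_self _ (div_nonneg zero_le_four hγ2.le))
      _ = l ^ 2 := rpow_two l
  unfold momentConst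
  refine mul_le_mul_of_nonneg_right ((mul_le_of_le_one_right ?_ hmiddle).trans hfirst)
    (rpow_nonneg (by linarith) _)
  exact div_nonneg (rpow_nonneg (by linarith) _) (by linarith)

lemma pow_div_factorial_le_mul_exp_div_pow {x : ℝ} (hx : 0 ≤ x) (j : ℕ) :
    x ^ j / j ! ≤ (x * exp 1 / j) ^ j := by
  rcases j.eq_zero_or_pos with rfl | hj
  · simp
  have hjpos : (0 : ℝ) < j := by exact_mod_cast hj
  have hexp : (j : ℝ) ^ j ≤ exp 1 ^ j * j ! := by
    rw [← div_le_iff₀ (by positivity), ← exp_nat_mul, mul_one]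
    exact pow_div_factorial_le_exp (x := (j : ℝ)) hjpos.le j
  rw [div_pow, mul_pow, div_le_div_iff₀ (by positivity) (by positivity), mul_assoc]
  gcongr

lemma pow_div_factorial_mul_momentConst_le {γ s κ : ℝ} {j : ℕ} (hγ : -2 < γ) (hκ : 0 ≤ κ)
    (hj : 5 ≤ s * j) :
    κ ^ j / j ! * momentConst γ (s * j)
      ≤ (s * j) ^ 2 * (κ * exp 1 * s * (s * j) ^ (s / (γ + 2) - 1)) ^ j := by
  have hl : 0 < s * j := by linarith
  have hpow : (s * j) ^ (s * j / (γ + 2)) = ((s * j) ^ (s / (γ + 2))) ^ j := by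
    rw [← rpow_natCast, ← rpow_mul hl.le]; ring_nf
  have hratio : κ * exp 1 / j * (s * j) ^ (s / (γ + 2))
      = κ * exp 1 * s * (s * j) ^ (s / (γ + 2) - 1) := by
    have hs : s ≠ 0 := left_ne_zero_of_mul hl.ne'
    have hj0 : (j : ℝ) ≠ 0 := right_ne_zero_of_mul hl.ne'
    rw [rpow_sub_one hl.ne']; field_simp
  calc κ ^ j / j ! * momentConst γ (s * j)
      ≤ (κ * exp 1 / j) ^ j * ((s * j) ^ 2 * ((s * j) ^ (s / (γ + 2))) ^ j) :=
        mul_le_mul (pow_div_factorial_le_mul_exp_div_pow hκ j)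
          ((momentConst_le hγ hj).trans_eq (by rw [hpow]))
          (momentConst_nonneg hγ (by linarith)) (by positivity)
    _ = (s * j) ^ 2 * (κ * exp 1 / j * (s * j) ^ (s / (γ + 2))) ^ j := by ring
    _ = _ := by rw [hratio]

lemma summable_pow_mul_pow_of_tendsto_zero {r : ℕ → ℝ} (hr : Tendsto r atTop (𝓝 0))
    (k : ℕ) :
    Summable (fun j : ℕ => (j : ℝ) ^ k * r j ^ j) := by
  refine .of_norm_bounded_eventually_nat
    (summable_pow_mul_geometric_of_norm_lt_one k (r := (1 / 2 : ℝ)) (by norm_num)) ?_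
  have hsmall : ‖(0 : ℝ)‖ < 1 / 2 := by norm_num
  filter_upwards [hr.norm.eventually (ge_mem_nhds hsmall)] with j hj
  rw [norm_mul, norm_pow, norm_pow, Real.norm_natCast]
  gcongr

/-- Finiteness of the stretched-exponential moment series: for `γ ∈ (-2,0)`, `0 < s < γ+2`
and `κ > 0`, the series `Σ_{j : s j > 4} κ^j/j! · α(s j)` converges. -/
theorem stretched_exponential_series_summable (γ s κ : ℝ) (hγ : γ ∈ Set.Ioo (-2 : ℝ) 0)
    (hs0 : 0 < s) (hs : s < γ + 2) (hκ : 0 < κ) :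
    Summable (fun j : ℕ =>
      if 4 < s * j then κ ^ j / (Nat.factorial j : ℝ) * momentConst γ (s * j) else 0) := by
  have hγ2 : -2 < γ := hγ.1
  have hθ : 0 < 1 - s / (γ + 2) := sub_pos.2 ((div_lt_one (by linarith)).2 hs)
  have hr : Tendsto (fun j : ℕ => κ * exp 1 * s * (s * j) ^ (s / (γ + 2) - 1))
      atTop (𝓝 0) := by
    rw [← neg_sub, ← mul_zero (κ * exp 1 * s)]
    exact ((tendsto_rpow_neg_atTop hθ).comp
      (tendsto_natCast_atTop_atTop.const_mul_atTop hs0)).const_mul _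
  refine .of_norm_bounded_eventually_nat
    ((summable_pow_mul_pow_of_tendsto_zero hr 2).mul_left (s ^ 2)) ?_
  filter_upwards [eventually_ge_atTop ⌈5 / s⌉₊] with j hj
  have h5 : 5 ≤ s * j := (div_le_iff₀' hs0).1 (Nat.ceil_le.1 hj)
  rw [if_pos (by linarith), norm_of_nonneg (mul_nonneg (by positivity)
    (momentConst_nonneg hγ2 (by linarith)))]
  exact (pow_div_factorial_mul_momentConst_le hγ2 hκ.le h5).trans_eq (by ring)
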